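/- arXiv:1711.00892 — 5 statements merged into one kernel-verified Lean document; each statement's English description precedes it below -/
import Mathlib

section
/- For every integer j with 1 ≤ j ≤ m−1, one has (−1)^m · ω_{2m−1} · (2m/β*) · K_{m,j/2} · K_{m,(2m−j−1)/2} = 1/j if j is even, and = 1/(2m−j−1) if j is odd. -/
open Real
noncomputable section

/-- The Adams critical exponent `β* = 2^{2m} π^m m!`. -/
def betaStar (m : ℕ) : ℝ := 2^(2*m) * Real.pi^m * (Nat.factorial m : ℝ)

/-- `ω_{2m-1} = 2π^m/(m-1)!`, the volume of the unit sphere `S^{2m-1}`. -/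
def omega2m1 (m : ℕ) : ℝ := 2 * Real.pi^m / (Nat.factorial (m-1) : ℝ)

/-- `K̃_{m,l} = (−1)^{l+1} 2^{2l−1} (l−1)! (m−1)! / (m−l−1)!`. -/
def Ktilde (m l : ℕ) : ℝ :=
  (-1)^(l+1) * 2^(2*l-1) * (Nat.factorial (l-1) : ℝ) * (Nat.factorial (m-1) : ℝ) /
    (Nat.factorial (m-l-1) : ℝ)

/-- `K_{m,j/2}`: `K̃_{m,j/2}` for even `j`, `−(j−1)K̃_{m,(j−1)/2}` for odd `j ≥ 3`, `1` for `j = 1`. -/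
def Km (m j : ℕ) : ℝ :=
  if j = 1 then 1
  else if j % 2 = 0 then Ktilde m (j/2)
  else -((j : ℝ) - 1) * Ktilde m ((j-1)/2)

lemma neg_one_pow_mul_two (n : ℕ) : ((-1:ℝ))^(n*2) = 1 := by
  rw [Nat.mul_comm, pow_mul]; norm_num

lemma key (a b : ℕ) :
    (-1:ℝ)^(a+b+3) * omega2m1 (a+b+3) * (2*((a+b+3 : ℕ):ℝ) / betaStar (a+b+3)) *
      Ktilde (a+b+3) (a+1) * Ktilde (a+b+3) (b+1)
      = -1/(4*((a:ℝ)+1)*((b:ℝ)+1)) := by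
  have ha : (a+b+3) - (a+1) - 1 = b+1 := by omega
  have hb : (a+b+3) - (b+1) - 1 = a+1 := by omega
  unfold omega2m1 betaStar Ktilde
  rw [ha, hb]
  rw [show (a+b+3) - 1 = a+b+2 from by omega,
      show 2*(a+1)-1 = 2*a+1 from by omega,
      show 2*(b+1)-1 = 2*b+1 from by omega,
      show (a+1) - 1 = a from rfl, show (b+1)-1 = b from rfl]
  have hfa : (Nat.factorial (a+1) : ℝ) = (a+1) * Nat.factorial a := by
    rw [Nat.factorial_succ]; push_cast; ring
  have hfb : (Nat.factorial (b+1) : ℝ) = (b+1) * Nat.factorial b := by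
    rw [Nat.factorial_succ]; push_cast; ring
  have hfm : (Nat.factorial (a+b+3) : ℝ) = (a+b+3) * Nat.factorial (a+b+2) := by
    rw [show a+b+3 = (a+b+2)+1 from rfl, Nat.factorial_succ]; push_cast; ring
  rw [hfa, hfb, hfm]
  have hpi := Real.pi_ne_zero
  have h1 : (Nat.factorial a : ℝ) ≠ 0 := Nat.cast_ne_zero.mpr (Nat.factorial_ne_zero a)
  have h2 : (Nat.factorial b : ℝ) ≠ 0 := Nat.cast_ne_zero.mpr (Nat.factorial_ne_zero b)
  have h3 : (Nat.factorial (a+b+2) : ℝ) ≠ 0 := Nat.cast_ne_zero.mpr (Nat.factorial_ne_zero _)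
  have h4 : ((a:ℝ)+1) ≠ 0 := by positivity
  have h5 : ((b:ℝ)+1) ≠ 0 := by positivity
  have h6 : ((a:ℝ)+(b:ℝ)+3) ≠ 0 := by positivity
  have hs : ((-1:ℝ))^(a+b+3) = -((-1)^a * (-1)^b) := by
    rw [pow_add, pow_add]; norm_num
  have hsa : ((-1:ℝ))^(a+1+1) = (-1)^a := by rw [pow_succ, pow_succ]; ring
  have hsb : ((-1:ℝ))^(b+1+1) = (-1)^b := by rw [pow_succ, pow_succ]; ring
  rw [hs, hsa, hsb]
  push_cast
  field_simp
  ring_nf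
  simp only [neg_one_pow_mul_two, one_mul, mul_one]

lemma keyOne (c : ℕ) :
    (-1:ℝ)^(c+2) * omega2m1 (c+2) * (2*((c+2 : ℕ):ℝ) / betaStar (c+2)) *
      Ktilde (c+2) (c+1) = 1/(2*(c:ℝ)+2) := by
  unfold omega2m1 betaStar Ktilde
  rw [show (c+2) - 1 = c+1 from rfl,
      show 2*(c+1)-1 = 2*c+1 from by omega,
      show (c+1) - 1 = c from rfl,
      show (c+2)-(c+1)-1 = 0 from by omega]
  have hfa : (Nat.factorial (c+1) : ℝ) = (c+1) * Nat.factorial c := by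
    rw [Nat.factorial_succ]; push_cast; ring
  have hfm : (Nat.factorial (c+2) : ℝ) = (c+2) * ((c+1) * Nat.factorial c) := by
    rw [show c+2 = (c+1)+1 from rfl, Nat.factorial_succ, Nat.factorial_succ]; push_cast; ring
  rw [hfa, hfm, Nat.factorial_zero]
  have hpi := Real.pi_ne_zero
  have h1 : (Nat.factorial c : ℝ) ≠ 0 := Nat.cast_ne_zero.mpr (Nat.factorial_ne_zero c)
  have h4 : ((c:ℝ)+1) ≠ 0 := by positivity
  have h6 : ((c:ℝ)+2) ≠ 0 := by positivity
  have hsc : ((-1:ℝ))^(c+2) = (-1)^c := by rw [pow_succ, pow_succ]; ring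
  rw [hsc]
  push_cast
  field_simp
  ring_nf
  simp only [neg_one_pow_mul_two, one_mul, mul_one]

/-- for `1 ≤ j ≤ m−1`,
`(−1)^m ω_{2m−1} (2m/β*) K_{m,j/2} K_{m,(2m−j−1)/2}` equals `1/j` for even `j` and
`1/(2m−j−1)` for odd `j`. -/
theorem statement9 (m : ℕ) (hm : 2 ≤ m) (j : ℕ) (hj1 : 1 ≤ j) (hjm : j ≤ m - 1) :
    (-1 : ℝ)^m * omega2m1 m * (2*(m:ℝ) / betaStar m) * Km m j * Km m (2*m - j - 1) =
      if j % 2 = 0 then 1 / (j : ℝ) else 1 / ((2*m - j - 1 : ℕ) : ℝ) := by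
  rcases eq_or_ne j 1 with rfl | hj1'
  · -- j = 1
    obtain ⟨c, rfl⟩ : ∃ c, m = c+2 := ⟨m-2, by omega⟩
    rw [show 2*(c+2) - 1 - 1 = 2*c+2 from by omega]
    rw [show Km (c+2) 1 = 1 from if_pos rfl]
    have e2 : Km (c+2) (2*c+2) = Ktilde (c+2) (c+1) := by
      unfold Km
      rw [if_neg (by omega), if_pos (by omega), show (2*c+2)/2 = c+1 from by omega]
    rw [e2, if_neg (by omega)]
    calc (-1:ℝ)^(c+2) * omega2m1 (c+2) * (2*((c+2:ℕ):ℝ) / betaStar (c+2)) * 1 *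
          Ktilde (c+2) (c+1)
        = (-1:ℝ)^(c+2) * omega2m1 (c+2) * (2*((c+2:ℕ):ℝ) / betaStar (c+2)) *
          Ktilde (c+2) (c+1) := by ring
      _ = 1/(2*(c:ℝ)+2) := keyOne c
      _ = 1/((2*c+2 : ℕ):ℝ) := by push_cast; ring_nf
  · rcases Nat.even_or_odd j with hje | hjo
    · -- j even
      obtain ⟨a, b, rfl, rfl⟩ : ∃ a b, j = 2*a+2 ∧ m = a+b+3 := by
        obtain ⟨l, rfl⟩ := hje
        exact ⟨l-1, m-l-2, by omega, by omega⟩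
      rw [show 2*(a+b+3) - (2*a+2) - 1 = 2*b+3 from by omega]
      have e1 : Km (a+b+3) (2*a+2) = Ktilde (a+b+3) (a+1) := by
        unfold Km
        rw [if_neg (by omega), if_pos (by omega), show (2*a+2)/2 = a+1 from by omega]
      have e3 : Km (a+b+3) (2*b+3) = -(2*(b:ℝ)+2) * Ktilde (a+b+3) (b+1) := by
        unfold Km
        rw [if_neg (by omega), if_neg (by omega),
            show (2*b+3-1)/2 = b+1 from by omega]
        push_cast; ring
      rw [e1, e3, if_pos (by omega)]
      have h5 : ((b:ℝ)+1) ≠ 0 := by positivity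
      calc (-1:ℝ)^(a+b+3) * omega2m1 (a+b+3) * (2*((a+b+3:ℕ):ℝ) / betaStar (a+b+3)) *
            Ktilde (a+b+3) (a+1) * (-(2*(b:ℝ)+2) * Ktilde (a+b+3) (b+1))
          = ((-1:ℝ)^(a+b+3) * omega2m1 (a+b+3) * (2*((a+b+3:ℕ):ℝ) / betaStar (a+b+3)) *
            Ktilde (a+b+3) (a+1) * Ktilde (a+b+3) (b+1)) * (-(2*(b:ℝ)+2)) := by ring
        _ = (-1/(4*((a:ℝ)+1)*((b:ℝ)+1))) * (-(2*(b:ℝ)+2)) := by rw [key]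
        _ = 1/((2*a+2 : ℕ):ℝ) := by push_cast; field_simp; ring
    · -- j odd, j ≥ 3
      obtain ⟨a, b, rfl, rfl⟩ : ∃ a b, j = 2*a+3 ∧ m = a+b+3 := by
        obtain ⟨l, rfl⟩ := hjo
        exact ⟨l-1, m-l-2, by omega, by omega⟩
      rw [show 2*(a+b+3) - (2*a+3) - 1 = 2*b+2 from by omega]
      have e1 : Km (a+b+3) (2*a+3) = -(2*(a:ℝ)+2) * Ktilde (a+b+3) (a+1) := by
        unfold Km
        rw [if_neg (by omega), if_neg (by omega),
            show (2*a+3-1)/2 = a+1 from by omega]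
        push_cast; ring
      have e3 : Km (a+b+3) (2*b+2) = Ktilde (a+b+3) (b+1) := by
        unfold Km
        rw [if_neg (by omega), if_pos (by omega), show (2*b+2)/2 = b+1 from by omega]
      rw [e1, e3, if_neg (by omega)]
      have h4 : ((a:ℝ)+1) ≠ 0 := by positivity
      calc (-1:ℝ)^(a+b+3) * omega2m1 (a+b+3) * (2*((a+b+3:ℕ):ℝ) / betaStar (a+b+3)) *
            (-(2*(a:ℝ)+2) * Ktilde (a+b+3) (a+1)) * Ktilde (a+b+3) (b+1)
          = ((-1:ℝ)^(a+b+3) * omega2m1 (a+b+3) * (2*((a+b+3:ℕ):ℝ) / betaStar (a+b+3)) *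
            Ktilde (a+b+3) (a+1) * Ktilde (a+b+3) (b+1)) * (-(2*(a:ℝ)+2)) := by ring
        _ = (-1/(4*((a:ℝ)+1)*((b:ℝ)+1))) * (-(2*(a:ℝ)+2)) := by rw [key]
        _ = 1/((2*b+2 : ℕ):ℝ) := by push_cast; field_simp; ring
end
end

section
/- The constant H_m := (2m/β*)² · ω_{2m−1} · Σ_{j=1}^{m−1} (−1)^{j+m} K_{m,j/2} K_{m,(2m−j−1)/2} satisfies H_m = (m/β*) · Σ_{j=1}^{m−1} (−1)^{⌊2j/m⌋} / j. -/
open Real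
noncomputable section

/-! The summand of `j` pairs `K_{m,j/2}` with `K_{m,(2m-1-j)/2}`. Of `j` and `2m-1-j` one is even,
`2l`, and the other odd, `2k+1`, with `l + k + 1 = m`, and then
`K̃_{m,l} K̃_{m,k} = (-1)^{m-1} 2^{2m-4} (m-1)!² / (l k)`. Hence the summand of `j` is
`± 2^{2m-3} (m-1)!² / l`, with sign `+` iff `j = 2l`, i.e. iff `⌊2l/m⌋ = 0`. As `j` runs through
`1, …, m-1` so does `l`, and the prefactor turns `2^{2m-3} (m-1)!²` into `m/β*`. -/

open Finset
open scoped Nat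

lemma Km_one (m : ℕ) : Km m 1 = 1 := if_pos rfl

lemma Km_two_mul (m l : ℕ) : Km m (2 * l) = Ktilde m l := by
  rw [Km, if_neg (by omega), if_pos (by omega), Nat.mul_div_cancel_left l two_pos]

lemma Km_two_mul_add_one (m : ℕ) {k : ℕ} (hk : 1 ≤ k) :
    Km m (2 * k + 1) = -(2 * k : ℝ) * Ktilde m k := by
  rw [Km, if_neg (by omega), if_neg (by omega), Nat.add_sub_cancel,
    Nat.mul_div_cancel_left k two_pos]
  push_cast
  ring

lemma Ktilde_mul_Ktilde (a b : ℕ) :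
    Ktilde (a + b + 3) (a + 1) * Ktilde (a + b + 3) (b + 1) =
      (-1) ^ (a + b) * 2 ^ (2 * (a + b) + 2) * ((a + b + 2)! : ℝ) ^ 2 / ((a + 1) * (b + 1)) := by
  simp only [Ktilde, show a + b + 3 - (a + 1) - 1 = b + 1 by omega,
    show a + b + 3 - (b + 1) - 1 = a + 1 by omega, show a + b + 3 - 1 = a + b + 2 by omega,
    Nat.add_sub_cancel, show 2 * (a + 1) - 1 = 2 * a + 1 by omega,
    show 2 * (b + 1) - 1 = 2 * b + 1 by omega, Nat.factorial_succ a, Nat.factorial_succ b]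
  push_cast
  field_simp
  ring

/-- The factor `-(2k)` of `K_{m,k+1/2}` cancels the `1/k` of `K̃_{m,l} K̃_{m,k}`, so `k = 0`,
where `K_{m,1/2} = 1`, fits the same formula. -/
lemma Km_two_mul_mul_Km_two_mul_add_one {m l k : ℕ} (hl : 1 ≤ l) (hm : l + k + 1 = m) :
    Km m (2 * l) * Km m (2 * k + 1) =
      (-1) ^ m * (2 ^ (2 * m - 3) * ((m - 1)! : ℝ) ^ 2) / l := by
  obtain ⟨a, rfl⟩ : ∃ a, l = a + 1 := ⟨l - 1, by omega⟩
  subst hm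
  rw [Km_two_mul]
  rcases k with _ | b
  · simp only [Nat.mul_zero, Nat.zero_add, Km_one, Ktilde, Nat.add_zero,
      show a + 1 + 1 - (a + 1) - 1 = 0 by omega, show 2 * (a + 1 + 1) - 3 = 2 * a + 1 by omega,
      show 2 * (a + 1) - 1 = 2 * a + 1 by omega, Nat.add_sub_cancel, Nat.factorial_succ a,
      Nat.factorial_zero]
    push_cast
    field_simp
  · rw [Km_two_mul_add_one _ (by omega), show a + 1 + (b + 1) + 1 = a + b + 3 by ring,
      mul_left_comm, Ktilde_mul_Ktilde, show 2 * (a + b + 3) - 3 = 2 * (a + b) + 3 by omega,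
      show a + b + 3 - 1 = a + b + 2 by omega]
    push_cast
    field_simp
    ring

def evenHalf (m j : ℕ) : ℕ := if j % 2 = 0 then j / 2 else (2 * m - 1 - j) / 2

lemma summand_eq {m j : ℕ} (hj : j ∈ Icc 1 (m - 1)) :
    (-1 : ℝ) ^ (j + m) * Km m j * Km m (2 * m - j - 1) =
      (2 ^ (2 * m - 3) * ((m - 1)! : ℝ) ^ 2) *
        ((-1) ^ (2 * evenHalf m j / m) / evenHalf m j) := by
  rw [mem_Icc] at hj
  have hsq : (-1 : ℝ) ^ m * (-1) ^ m = 1 := by rw [← mul_pow]; norm_num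
  rcases Nat.even_or_odd' j with ⟨l, rfl | rfl⟩
  · rw [evenHalf, if_pos (by omega), Nat.mul_div_cancel_left l two_pos, Nat.div_eq_of_lt (by omega),
      show 2 * m - 2 * l - 1 = 2 * (m - l - 1) + 1 by omega, mul_assoc,
      Km_two_mul_mul_Km_two_mul_add_one (by omega) (by omega), pow_add, pow_mul, neg_one_sq,
      one_pow]
    linear_combination (2 ^ (2 * m - 3) * ((m - 1)! : ℝ) ^ 2 / l) * hsq
  · rw [evenHalf, if_neg (by omega), show (2 * m - 1 - (2 * l + 1)) / 2 = m - l - 1 by omega,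
      Nat.div_eq_of_lt_le (k := 1) (by omega) (by omega),
      show 2 * m - (2 * l + 1) - 1 = 2 * (m - l - 1) by omega, mul_assoc, mul_comm (Km m _),
      Km_two_mul_mul_Km_two_mul_add_one (by omega) (by omega), pow_add, pow_add, pow_mul,
      neg_one_sq, one_pow]
    linear_combination (-2 ^ (2 * m - 3) * ((m - 1)! : ℝ) ^ 2 / (m - l - 1 : ℕ)) * hsq

lemma sum_Icc_comp_evenHalf (m : ℕ) (f : ℕ → ℝ) :
    ∑ j ∈ Icc 1 (m - 1), f (evenHalf m j) =
      ∑ l ∈ Icc 1 (m - 1), f l := by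
  refine sum_nbij' (evenHalf m)
    (fun l => if 2 * l < m then 2 * l else 2 * m - 1 - 2 * l) ?_ ?_ ?_ ?_ (fun _ _ => rfl)
  all_goals
    intro j hj
    simp only [evenHalf, mem_Icc] at hj ⊢
    split_ifs <;> omega

lemma betaStar_omega_mul_eq {m : ℕ} (hm : 2 ≤ m) :
    (2 * (m : ℝ) / betaStar m) ^ 2 * omega2m1 m * (2 ^ (2 * m - 3) * ((m - 1)! : ℝ) ^ 2) =
      m / betaStar m := by
  obtain ⟨c, rfl⟩ : ∃ c, m = c + 2 := ⟨m - 2, by omega⟩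
  rw [betaStar, omega2m1, show 2 * (c + 2) - 3 = 2 * c + 1 by omega, show c + 2 - 1 = c + 1 by omega,
    show 2 * (c + 2) = 2 * c + 4 by ring, Nat.factorial_succ (c + 1), Nat.factorial_succ c]
  push_cast
  field_simp
  ring

/-- `H_m = (2m/β*)² ω_{2m−1} Σ_{j=1}^{m−1} (−1)^{j+m} K_{m,j/2} K_{m,(2m−j−1)/2}`
equals `(m/β*) Σ_{j=1}^{m−1} (−1)^{⌊2j/m⌋}/j`. -/
theorem statement10 (m : ℕ) (hm : 2 ≤ m) :
    (2*(m:ℝ) / betaStar m)^2 * omega2m1 m *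
      ∑ j ∈ Finset.Icc 1 (m-1), (-1 : ℝ)^(j+m) * Km m j * Km m (2*m - j - 1)
    = ((m:ℝ) / betaStar m) * ∑ j ∈ Finset.Icc 1 (m-1), (-1 : ℝ)^(2*j/m) / (j : ℝ) := by
  rw [sum_congr rfl fun j hj => summand_eq hj,
    sum_Icc_comp_evenHalf m fun l => 2 ^ (2 * m - 3) * ((m - 1)! : ℝ) ^ 2 * ((-1) ^ (2 * l / m) / l),
    ← mul_sum, ← mul_assoc, betaStar_omega_mul_eq hm]
end
end

section
/- For every integer l with 1 ≤ l ≤ m−1 and every x ∈ ℝ^{2m} with x ≠ 0, the l-fold iterated Laplacian of the function x ↦ log|x| satisfies Δ^l(log|x|) = K̃_{m,l} · |x|^{−2l}. -/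
open MeasureTheory Real
noncomputable section

/-- The Laplacian of `u : ℝ^n → ℝ` at `x`, as the sum of second partial derivatives. -/
def lap {n : ℕ} (u : EuclideanSpace ℝ (Fin n) → ℝ) (x : EuclideanSpace ℝ (Fin n)) : ℝ :=
  ∑ i : Fin n, fderiv ℝ (fun y => fderiv ℝ u y (EuclideanSpace.single i 1)) x
    (EuclideanSpace.single i 1)

/-- The `l`-fold iterated Laplacian `Δ^l u`. -/
def iterLap {n : ℕ} (l : ℕ) (u : EuclideanSpace ℝ (Fin n) → ℝ) :
    EuclideanSpace ℝ (Fin n) → ℝ := lap^[l] u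

/-- `ω_{2m} = 2^{m+1} π^m / (2m−1)‼`, the volume of the unit sphere `S^{2m} ⊂ ℝ^{2m+1}`. -/
def omega2m (m : ℕ) : ℝ := 2^(m+1) * Real.pi^m / (Nat.doubleFactorial (2*m - 1) : ℝ)

/-- The standard bubble `η₀(y) = −(m/β*) log(1 + |y|²/4)`. -/
def eta0 (m : ℕ) (y : EuclideanSpace ℝ (Fin (2*m))) : ℝ :=
  -((m : ℝ) / betaStar m) * Real.log (1 + ‖y‖^2 / 4)

/-!
For a radial function `F (|y|²)` on `ℝⁿ \ {0}` one has `Δ = 4|y|² F'' + 2n F'`. Hence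
`Δ log|y| = (n - 2)/|y|²` and `Δ (|y|²)^k = 2k(2k + n - 2) (|y|²)^(k-1)`, so with `n = 2m` each
further Laplacian multiplies the coefficient of `|y|^{-2l}` by `-4l(m - l - 1)`, which is exactly
the ratio `K̃_{m,l+1} / K̃_{m,l}`.
-/

open Filter Topology

section Laplacian

variable {n : ℕ}

theorem Filter.EventuallyEq.lap_eq {u v : EuclideanSpace ℝ (Fin n) → ℝ}
    {x : EuclideanSpace ℝ (Fin n)} (h : u =ᶠ[𝓝 x] v) : lap u x = lap v x := by
  refine Finset.sum_congr rfl fun i _ => ?_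
  have hpartial : (fun y => fderiv ℝ u y (EuclideanSpace.single i 1)) =ᶠ[𝓝 x]
      (fun y => fderiv ℝ v y (EuclideanSpace.single i 1)) :=
    (h.fderiv (𝕜 := ℝ)).mono fun y hy => by simp only [hy]
  rw [hpartial.fderiv_eq]

theorem iterLap_succ (l : ℕ) (u : EuclideanSpace ℝ (Fin n) → ℝ) :
    iterLap (l + 1) u = lap (iterLap l u) :=
  Function.iterate_succ_apply' lap l u

theorem hasFDerivAt_comp_normSq {F F' : ℝ → ℝ} {y : EuclideanSpace ℝ (Fin n)}
    (hF : HasDerivAt F (F' (‖y‖ ^ 2)) (‖y‖ ^ 2)) :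
    HasFDerivAt (fun z : EuclideanSpace ℝ (Fin n) => F (‖z‖ ^ 2))
      (F' (‖y‖ ^ 2) • ((2 : ℕ) • innerSL ℝ y)) y :=
  hF.comp_hasFDerivAt y (hasStrictFDerivAt_norm_sq y).hasFDerivAt

theorem lap_comp_normSq {F F' F'' : ℝ → ℝ}
    (hF : ∀ t, 0 < t → HasDerivAt F (F' t) t) (hF' : ∀ t, 0 < t → HasDerivAt F' (F'' t) t)
    {x : EuclideanSpace ℝ (Fin n)} (hx : x ≠ 0) :
    lap (fun y => F (‖y‖ ^ 2)) x = 4 * ‖x‖ ^ 2 * F'' (‖x‖ ^ 2) + 2 * n * F' (‖x‖ ^ 2) := by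
  have hpos : ∀ y : EuclideanSpace ℝ (Fin n), y ≠ 0 → 0 < ‖y‖ ^ 2 := fun y hy => by positivity
  have hpartial (i : Fin n) : (fun y => fderiv ℝ (fun z : EuclideanSpace ℝ (Fin n) => F (‖z‖ ^ 2)) y
      (EuclideanSpace.single i 1)) =ᶠ[𝓝 x] fun y => F' (‖y‖ ^ 2) * (2 * y i) := by
    filter_upwards [isOpen_compl_singleton.mem_nhds hx] with y hy
    rw [(hasFDerivAt_comp_normSq (hF _ (hpos y hy))).fderiv]
    simp [EuclideanSpace.inner_single_right]
  have hsecond (i : Fin n) : HasFDerivAt (fun y : EuclideanSpace ℝ (Fin n) => F' (‖y‖ ^ 2) * (2 * y i))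
      (F' (‖x‖ ^ 2) • (2 : ℝ) • EuclideanSpace.proj i +
        (2 * x i) • F'' (‖x‖ ^ 2) • (2 : ℕ) • innerSL ℝ x) x :=
    (hasFDerivAt_comp_normSq (hF' _ (hpos x hx))).mul
      ((EuclideanSpace.proj i : EuclideanSpace ℝ (Fin n) →L[ℝ] ℝ).hasFDerivAt.const_mul 2)
  have hdiag (i : Fin n) : fderiv ℝ (fun y => fderiv ℝ (fun z : EuclideanSpace ℝ (Fin n) =>
      F (‖z‖ ^ 2)) y (EuclideanSpace.single i 1)) x (EuclideanSpace.single i 1) =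
        4 * F'' (‖x‖ ^ 2) * x i ^ 2 + 2 * F' (‖x‖ ^ 2) := by
    rw [(hpartial i).fderiv_eq, (hsecond i).fderiv]
    simp [EuclideanSpace.inner_single_right]
    ring
  have hnormSq : ∑ i, x i ^ 2 = ‖x‖ ^ 2 := by simp [EuclideanSpace.norm_sq_eq]
  rw [lap, Finset.sum_congr rfl fun i _ => hdiag i, Finset.sum_add_distrib, ← Finset.mul_sum,
    hnormSq, Finset.sum_const, Finset.card_univ, Fintype.card_fin, nsmul_eq_mul]
  ring

theorem lap_log_norm {x : EuclideanSpace ℝ (Fin n)} (hx : x ≠ 0) :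
    lap (fun y => Real.log ‖y‖) x = (n - 2) / ‖x‖ ^ 2 := by
  have hlog : (fun y : EuclideanSpace ℝ (Fin n) => Real.log ‖y‖) =
      fun y => Real.log (‖y‖ ^ 2) / 2 := funext fun y => by rw [Real.log_pow]; ring
  rw [hlog, lap_comp_normSq (F' := fun t => t⁻¹ / 2) (F'' := fun t => -(t ^ 2)⁻¹ / 2)
    (fun t ht => (Real.hasDerivAt_log ht.ne').div_const 2)
    (fun t ht => (hasDerivAt_inv ht.ne').div_const 2) hx]
  have : ‖x‖ ≠ 0 := norm_ne_zero_iff.mpr hx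
  field_simp
  ring

theorem lap_const_mul_normSq_zpow (c : ℝ) (k : ℤ) {x : EuclideanSpace ℝ (Fin n)} (hx : x ≠ 0) :
    lap (fun y => c * (‖y‖ ^ 2) ^ k) x = 2 * k * (2 * k + n - 2) * c * (‖x‖ ^ 2) ^ (k - 1) := by
  rw [lap_comp_normSq (F' := fun t => c * (k * t ^ (k - 1)))
    (F'' := fun t => c * (k * ((k - 1 : ℤ) * t ^ (k - 1 - 1))))
    (fun t ht => (hasDerivAt_zpow k t (.inl ht.ne')).const_mul c)
    (fun t ht => ((hasDerivAt_zpow (k - 1) t (.inl ht.ne')).const_mul _).const_mul c) hx]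
  have hq : (‖x‖ ^ 2 : ℝ) ≠ 0 := by positivity
  rw [zpow_sub₀ hq (k - 1), zpow_one]
  push_cast
  field_simp
  ring

end Laplacian

theorem Ktilde_one {m : ℕ} (hm : 2 ≤ m) : Ktilde m 1 = 2 * (m - 1) := by
  obtain ⟨b, rfl⟩ : ∃ b, m = b + 2 := ⟨m - 2, by omega⟩
  simp only [Ktilde, show b + 2 - 1 = b + 1 by omega, Nat.factorial_succ b]
  push_cast
  field_simp
  ring

theorem Ktilde_succ {m l : ℕ} (hl : 1 ≤ l) (hlm : l + 1 ≤ m - 1) :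
    Ktilde m (l + 1) = -4 * l * (m - l - 1) * Ktilde m l := by
  obtain ⟨a, rfl⟩ : ∃ a, m = l + 2 + a := ⟨m - l - 2, by omega⟩
  obtain ⟨b, rfl⟩ : ∃ b, l = b + 1 := ⟨l - 1, by omega⟩
  simp only [Ktilde, show 2 * (b + 1 + 1) - 1 = 2 * b + 3 by omega,
    show b + 1 + 2 + a - (b + 1 + 1) - 1 = a by omega, show 2 * (b + 1) - 1 = 2 * b + 1 by omega,
    show b + 1 + 2 + a - (b + 1) - 1 = a + 1 by omega, Nat.add_sub_cancel, Nat.factorial_succ]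
  push_cast
  field_simp
  ring

theorem iterLap_log_norm {m l : ℕ} (hl : 1 ≤ l) (hlm : l ≤ m - 1)
    {x : EuclideanSpace ℝ (Fin (2 * m))} (hx : x ≠ 0) :
    iterLap l (fun y => Real.log ‖y‖) x = Ktilde m l * (‖x‖ ^ 2) ^ (-(l : ℤ)) := by
  induction l, hl using Nat.le_induction generalizing x with
  | base =>
    rw [iterLap, Function.iterate_one, lap_log_norm hx, Ktilde_one (by omega)]
    push_cast
    field_simp
  | succ l hl ih =>
    have hnear : iterLap l (fun y => Real.log ‖y‖) =ᶠ[𝓝 x]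
        fun y => Ktilde m l * (‖y‖ ^ 2) ^ (-(l : ℤ)) := by
      filter_upwards [isOpen_compl_singleton.mem_nhds hx] with y hy using ih (by omega) hy
    rw [iterLap_succ, hnear.lap_eq, lap_const_mul_normSq_zpow _ _ hx, Ktilde_succ hl hlm,
      show -((l + 1 : ℕ) : ℤ) = -l - 1 by push_cast; ring]
    push_cast
    ring

theorem statement11_general (m : ℕ) (l : ℕ) (hl1 : 1 ≤ l) (hlm : l ≤ m - 1)
    (x : EuclideanSpace ℝ (Fin (2*m))) (hx : x ≠ 0) :
    iterLap l (fun y => Real.log ‖y‖) x = Ktilde m l / ‖x‖^(2*l) := by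
  rw [iterLap_log_norm hl1 hlm hx, zpow_neg, zpow_natCast, ← pow_mul, div_eq_mul_inv, mul_comm 2 l]

/-- for `1 ≤ l ≤ m−1` and `x ≠ 0`, `Δ^l(log|x|) = K̃_{m,l} |x|^{−2l}`. -/
theorem statement11 (m : ℕ) (hm : 2 ≤ m) (l : ℕ) (hl1 : 1 ≤ l) (hlm : l ≤ m - 1)
    (x : EuclideanSpace ℝ (Fin (2*m))) (hx : x ≠ 0) :
    iterLap l (fun y => Real.log ‖y‖) x = Ktilde m l / ‖x‖^(2*l) :=
  statement11_general m l hl1 hlm x hx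
end
end

section
/- For every integer l with 1 ≤ l ≤ m−1 and every y ∈ ℝ^{2m}, the l-fold iterated Laplacian of η₀ satisfies Δ^l η₀(y) = (m/β*) Σ_{k=0}^{l} a_{k,l} |y|^{2k} / (4 + |y|²)^{2l}, where a_{k,l} := (−1)^l (l−1)! · binom(l,k) · 2^{4l−2k} · (m+l−1)! (m−l+k−1)! / ( (m+k−1)! (m−l−1)! ). -/
open MeasureTheory Real
noncomputable section

/-- The coefficients `a_{k,l}` in the formula for `Δ^l η₀`. -/
def acoef (m k l : ℕ) : ℝ :=
  (-1)^l * (Nat.factorial (l-1) : ℝ) * (Nat.choose l k : ℝ) * 2^(4*l - 2*k) *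
    (Nat.factorial (m+l-1) : ℝ) * (Nat.factorial (m-l+k-1) : ℝ) /
    ((Nat.factorial (m+k-1) : ℝ) * (Nat.factorial (m-l-1) : ℝ))

/-! Every iterated Laplacian of `η₀` is a radial function of `s = |y|²`, and on a radial
function `h(|y|²)` in `ℝⁿ` the Laplacian acts as `4 s h'' + 2 n h'`. This operator sends
`P(s) / (s + a)^p`, `P` a polynomial, to another polynomial divided by `(s + a)^(p+2)`, so
`Δ^l η₀ = (m/β*) P_l(s) / (s + 4)^(2l)` where the coefficients of `P_{l+1}` are a three-term
combination of those of `P_l`. That the `a_{k,l}` satisfy this recurrence follows from the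
ratios `a_{k+1,l} / a_{k,l}`, `a_{k+1,l+1} / a_{k,l}` and `a_{0,l+1} / a_{0,l}`, read off from
the factorials. -/

open Polynomial

def evalDivPow (a : ℝ) (p : ℕ) (P : ℝ[X]) (s : ℝ) : ℝ := P.eval s / (s + a) ^ p

def derivNum (a : ℝ) (p : ℕ) (P : ℝ[X]) : ℝ[X] := derivative P * (X + C a) - C (p : ℝ) * P

lemma hasDerivAt_evalDivPow {a s : ℝ} (hs : s + a ≠ 0) (p : ℕ) (P : ℝ[X]) :
    HasDerivAt (evalDivPow a p P) (evalDivPow a (p + 1) (derivNum a p P) s) s := by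
  have hden : HasDerivAt (fun s => (s + a) ^ p) (p * (s + a) ^ (p - 1) * 1) s :=
    ((hasDerivAt_id s).add_const a).pow p
  refine ((P.hasDerivAt s).fun_div hden (pow_ne_zero p hs)).congr_deriv ?_
  simp only [evalDivPow, derivNum, eval_sub, eval_mul, eval_add, eval_X, eval_C]
  rcases p with _ | p
  · simp [hs]
  · rw [Nat.add_sub_cancel]
    field_simp
    ring

lemma coeff_derivNum (a : ℝ) (p : ℕ) (P : ℝ[X]) (k : ℕ) :
    (derivNum a p P).coeff k = a * (k + 1) * P.coeff (k + 1) + (k - p) * P.coeff k := by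
  simp only [derivNum, mul_add, coeff_sub, coeff_add, coeff_C_mul, coeff_mul_C, coeff_derivative]
  rcases k with _ | k
  · simp only [coeff_mul_X_zero, Nat.cast_zero]
    ring
  · simp only [coeff_mul_X, coeff_derivative, Nat.cast_succ]
    ring

lemma derivNum_C_mul (a : ℝ) (p : ℕ) (c : ℝ) (P : ℝ[X]) :
    derivNum a p (C c * P) = C c * derivNum a p P := by
  simp only [derivNum, derivative_C_mul]
  ring

section RadialLaplacian

variable {n : ℕ}

lemma hasFDerivAt_comp_norm_sq {h h' : ℝ → ℝ} (x : EuclideanSpace ℝ (Fin n))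
    (hh : HasDerivAt h (h' (‖x‖ ^ 2)) (‖x‖ ^ 2)) :
    HasFDerivAt (fun z : EuclideanSpace ℝ (Fin n) => h (‖z‖ ^ 2))
      (h' (‖x‖ ^ 2) • (2 • innerSL ℝ x)) x := by
  have hsq : HasFDerivAt (fun z : EuclideanSpace ℝ (Fin n) => ‖z‖ ^ 2) (2 • innerSL ℝ x) x := by
    simpa using (hasFDerivAt_id x).norm_sq
  exact hh.comp_hasFDerivAt x hsq

lemma fderiv_comp_norm_sq_single {h h' : ℝ → ℝ} (hh : ∀ s, 0 ≤ s → HasDerivAt h (h' s) s)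
    (i : Fin n) :
    (fun x => fderiv ℝ (fun z : EuclideanSpace ℝ (Fin n) => h (‖z‖ ^ 2)) x
      (EuclideanSpace.single i 1)) = fun x => h' (‖x‖ ^ 2) * (2 * x i) := by
  funext x
  rw [(hasFDerivAt_comp_norm_sq x (hh _ (sq_nonneg _))).fderiv]
  simp [EuclideanSpace.inner_single_right]

theorem lap_comp_norm_sq {h h' h'' : ℝ → ℝ} (hh : ∀ s, 0 ≤ s → HasDerivAt h (h' s) s)
    (hh' : ∀ s, 0 ≤ s → HasDerivAt h' (h'' s) s) (y : EuclideanSpace ℝ (Fin n)) :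
    lap (fun z => h (‖z‖ ^ 2)) y = 4 * ‖y‖ ^ 2 * h'' (‖y‖ ^ 2) + 2 * n * h' (‖y‖ ^ 2) := by
  have hcoord (i : Fin n) : HasFDerivAt (fun x : EuclideanSpace ℝ (Fin n) => 2 * x i)
      ((2 : ℝ) • innerSL ℝ (EuclideanSpace.single i 1)) y := by
    convert ((2 : ℝ) • innerSL ℝ (EuclideanSpace.single i (1 : ℝ))).hasFDerivAt using 1
    funext x
    simp [EuclideanSpace.inner_single_left]
  have hsecond (i : Fin n) :
      fderiv ℝ (fun x => fderiv ℝ (fun z : EuclideanSpace ℝ (Fin n) => h (‖z‖ ^ 2)) x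
        (EuclideanSpace.single i 1)) y (EuclideanSpace.single i 1)
        = 4 * y i ^ 2 * h'' (‖y‖ ^ 2) + 2 * h' (‖y‖ ^ 2) := by
    rw [fderiv_comp_norm_sq_single hh i,
      ((hasFDerivAt_comp_norm_sq y (hh' _ (sq_nonneg _))).fun_mul (hcoord i)).fderiv]
    simp only [add_apply, smul_apply, innerSL_apply_apply, EuclideanSpace.inner_single_right,
      PiLp.single_apply, if_true, conj_trivial, smul_eq_mul, nsmul_eq_mul]
    ring
  unfold lap
  rw [Finset.sum_congr rfl fun i _ => hsecond i, Finset.sum_add_distrib, ← Finset.sum_mul,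
    ← Finset.mul_sum, EuclideanSpace.real_norm_sq_eq, Finset.sum_const, Finset.card_univ,
    Fintype.card_fin, nsmul_eq_mul]
  ring

end RadialLaplacian

def radialLapNum (n : ℕ) (a : ℝ) (p : ℕ) (P : ℝ[X]) : ℝ[X] :=
  C 4 * (X * derivNum a (p + 1) (derivNum a p P)) + C (2 * n : ℝ) * ((X + C a) * derivNum a p P)

theorem lap_evalDivPow_norm_sq {n : ℕ} {a : ℝ} (ha : 0 < a) (p : ℕ) (P : ℝ[X])
    (y : EuclideanSpace ℝ (Fin n)) :
    lap (fun z => evalDivPow a p P (‖z‖ ^ 2)) y =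
      evalDivPow a (p + 2) (radialLapNum n a p P) (‖y‖ ^ 2) := by
  have hpos (s : ℝ) (hs : 0 ≤ s) : s + a ≠ 0 := by positivity
  rw [lap_comp_norm_sq (fun s hs => hasDerivAt_evalDivPow (hpos s hs) p P)
    (fun s hs => hasDerivAt_evalDivPow (hpos s hs) (p + 1) _)]
  have hy := hpos _ (sq_nonneg ‖y‖)
  simp only [evalDivPow, radialLapNum, eval_add, eval_mul, eval_C, eval_X]
  field_simp
  ring

lemma coeff_radialLapNum_zero (n : ℕ) (a : ℝ) (p : ℕ) (P : ℝ[X]) :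
    (radialLapNum n a p P).coeff 0 = 2 * n * a * (derivNum a p P).coeff 0 := by
  simp only [radialLapNum, coeff_add, coeff_C_mul, add_mul, coeff_X_mul_zero]
  ring

lemma coeff_radialLapNum_succ (n : ℕ) (a : ℝ) (p : ℕ) (P : ℝ[X]) (i : ℕ) :
    (radialLapNum n a p P).coeff (i + 1) = 4 * (derivNum a (p + 1) (derivNum a p P)).coeff i +
      2 * n * ((derivNum a p P).coeff i + a * (derivNum a p P).coeff (i + 1)) := by
  simp only [radialLapNum, coeff_add, coeff_C_mul, add_mul, coeff_X_mul]

lemma radialLapNum_C_mul (n : ℕ) (a : ℝ) (p : ℕ) (c : ℝ) (P : ℝ[X]) :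
    radialLapNum n a p (C c * P) = C c * radialLapNum n a p P := by
  simp only [radialLapNum, derivNum_C_mul]
  ring

lemma acoef_eq_zero_of_lt {m k l : ℕ} (h : l < k) : acoef m k l = 0 := by
  simp [acoef, Nat.choose_eq_zero_of_lt h]

lemma acoef_succ_left {m l : ℕ} (hlm : l + 1 ≤ m) (k : ℕ) :
    acoef m (k + 1) l = (l - k) * (m - l + k) / (4 * (k + 1) * (m + k)) * acoef m k l := by
  rcases lt_trichotomy k l with hkl | rfl | hlk
  · obtain ⟨d, rfl⟩ : ∃ d, m = l + 1 + d := ⟨m - (l + 1), by omega⟩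
    have hchoose : (l.choose (k + 1) : ℝ) * (k + 1) = l.choose k * (l - k) := by
      rw [← Nat.cast_sub hkl.le]
      exact_mod_cast Nat.choose_succ_right_eq l k
    rw [acoef, acoef, show 4 * l - 2 * k = 4 * l - 2 * (k + 1) + 2 by omega,
      show l + 1 + d - l + (k + 1) - 1 = d + k + 1 by omega,
      show l + 1 + d - l + k - 1 = d + k by omega,
      show l + 1 + d + (k + 1) - 1 = l + d + k + 1 by omega,
      show l + 1 + d + k - 1 = l + d + k by omega,
      Nat.factorial_succ (d + k), Nat.factorial_succ (l + d + k), pow_add]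
    push_cast
    field_simp
    linear_combination 4 * ((d : ℝ) + k + 1) * (l + 1 + d + k) * hchoose
  · simp [acoef_eq_zero_of_lt (Nat.lt_succ_self k)]
  · simp [acoef_eq_zero_of_lt hlk, acoef_eq_zero_of_lt (hlk.trans (Nat.lt_succ_self k))]

lemma acoef_succ_succ {m l : ℕ} (hl : 1 ≤ l) (hlm : l + 2 ≤ m) (k : ℕ) :
    acoef m (k + 1) (l + 1) =
      -(4 * l * (l + 1) * (m + l) * (m - l - 1)) / ((k + 1) * (m + k)) * acoef m k l := by
  rcases le_or_gt k l with hkl | hlk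
  · obtain ⟨d, rfl⟩ : ∃ d, m = l + 2 + d := ⟨m - (l + 2), by omega⟩
    obtain ⟨e, rfl⟩ : ∃ e, l = e + 1 := ⟨l - 1, by omega⟩
    have hchoose : ((e + 1 + 1).choose (k + 1) : ℝ) * (k + 1) = (e + 1 + 1) * (e + 1).choose k := by
      exact_mod_cast (Nat.add_one_mul_choose_eq (e + 1) k).symm
    rw [acoef, acoef, show 4 * (e + 1 + 1) - 2 * (k + 1) = 4 * (e + 1) - 2 * k + 2 by omega,
      show e + 1 + 2 + d + (e + 1 + 1) - 1 = (2 * e + 3 + d) + 1 by omega,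
      show e + 1 + 2 + d + (e + 1) - 1 = 2 * e + 3 + d by omega,
      show e + 1 + 2 + d - (e + 1 + 1) + (k + 1) - 1 = d + k + 1 by omega,
      show e + 1 + 2 + d - (e + 1) + k - 1 = d + k + 1 by omega,
      show e + 1 + 2 + d + (k + 1) - 1 = (e + d + k + 2) + 1 by omega,
      show e + 1 + 2 + d + k - 1 = e + d + k + 2 by omega,
      show e + 1 + 2 + d - (e + 1 + 1) - 1 = d by omega,
      show e + 1 + 2 + d - (e + 1) - 1 = d + 1 by omega,
      show e + 1 + 1 - 1 = e + 1 by omega, show e + 1 - 1 = e by omega,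
      Nat.factorial_succ (2 * e + 3 + d), Nat.factorial_succ (e + d + k + 2),
      Nat.factorial_succ d, Nat.factorial_succ e, pow_add (2 : ℝ) (4 * (e + 1) - 2 * k) 2,
      pow_succ (-1 : ℝ)]
    push_cast
    field_simp
    linear_combination -4 * (2 * (e : ℝ) + d + 4) * (e + d + k + 3) * (d + 1) * hchoose
  · simp [acoef_eq_zero_of_lt hlk, acoef_eq_zero_of_lt (Nat.succ_lt_succ hlk)]

lemma acoef_zero_succ {m l : ℕ} (hl : 1 ≤ l) :
    acoef m 0 (l + 1) = -(16 * l * (m + l)) * acoef m 0 l := by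
  obtain ⟨e, rfl⟩ : ∃ e, l = e + 1 := ⟨l - 1, by omega⟩
  rw [acoef, acoef, show 4 * (e + 1 + 1) - 2 * 0 = 4 * (e + 1) - 2 * 0 + 4 by omega,
    show m + (e + 1 + 1) - 1 = (m + e) + 1 by omega, show m + (e + 1) - 1 = m + e by omega,
    show e + 1 + 1 - 1 = e + 1 by omega, show e + 1 - 1 = e by omega,
    Nat.factorial_succ (m + e), Nat.factorial_succ e, pow_add, pow_succ (-1 : ℝ)]
  simp only [Nat.choose_zero_right, add_zero]
  push_cast
  field_simp
  ring

lemma acoef_zero_one {m : ℕ} (hm : 1 ≤ m) : acoef m 0 1 = -(16 * m) := by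
  obtain ⟨e, rfl⟩ : ∃ e, m = e + 1 := ⟨m - 1, by omega⟩
  rw [acoef, show e + 1 + 1 - 1 = e + 1 by omega, show e + 1 + 0 - 1 = e by omega,
    Nat.factorial_succ e]
  simp only [Nat.choose_zero_right, add_zero]
  push_cast
  field_simp
  ring

def acoefPoly (m l : ℕ) : ℝ[X] := ∑ k ∈ Finset.range (l + 1), C (acoef m k l) * X ^ k

lemma coeff_acoefPoly (m l k : ℕ) : (acoefPoly m l).coeff k = acoef m k l := by
  simp only [acoefPoly, finsetSum_coeff, coeff_C_mul_X_pow, Finset.sum_ite_eq, Finset.mem_range]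
  split_ifs with hk
  · rfl
  · exact (acoef_eq_zero_of_lt (by omega)).symm

theorem radialLapNum_acoefPoly {m l : ℕ} (hl : 1 ≤ l) (hlm : l + 2 ≤ m) :
    radialLapNum (2 * m) 4 (2 * l) (acoefPoly m l) = acoefPoly m (l + 1) := by
  have hm : (m : ℝ) ≠ 0 := by norm_cast; omega
  ext j
  rcases j with _ | i
  · rw [coeff_radialLapNum_zero, coeff_derivNum, coeff_acoefPoly, coeff_acoefPoly, coeff_acoefPoly,
      acoef_zero_succ hl, acoef_succ_left (by omega) 0]
    push_cast
    field_simp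
    ring
  · simp only [coeff_radialLapNum_succ, coeff_derivNum, coeff_acoefPoly]
    rw [acoef_succ_succ hl hlm i, acoef_succ_left (by omega) (i + 1), acoef_succ_left (by omega) i]
    push_cast
    field_simp
    ring

theorem lap_eta0 {m : ℕ} (hm : 2 ≤ m) :
    lap (eta0 m) = fun y => evalDivPow 4 2 (C (m / betaStar m) * acoefPoly m 1) (‖y‖ ^ 2) := by
  set c := (m : ℝ) / betaStar m
  have hlog (s : ℝ) (hs : 0 ≤ s) :
      HasDerivAt (fun s => -c * Real.log (1 + s / 4)) (-c / (s + 4)) s := by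
    have hlin : HasDerivAt (fun s : ℝ => 1 + s / 4) (1 / 4) s :=
      ((hasDerivAt_id s).div_const 4).const_add 1
    refine ((hlin.log (by positivity)).const_mul (-c)).congr_deriv ?_
    field_simp
    ring
  have hinv (s : ℝ) (hs : 0 ≤ s) : HasDerivAt (fun s => -c / (s + 4)) (c / (s + 4) ^ 2) s := by
    refine ((hasDerivAt_const s (-c)).fun_div ((hasDerivAt_id s).add_const 4)
      (by positivity)).congr_deriv ?_
    simp
  funext y
  rw [show eta0 m = fun z => -c * Real.log (1 + ‖z‖ ^ 2 / 4) from rfl,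
    lap_comp_norm_sq hlog hinv y]
  simp only [evalDivPow, acoefPoly, Finset.sum_range_succ, Finset.sum_range_zero,
    acoef_zero_one (by omega : 1 ≤ m), acoef_succ_left hm 0, eval_mul, eval_C, eval_add, eval_pow,
    eval_X, eval_zero]
  push_cast
  field_simp
  ring

theorem iterLap_eta0 {m l : ℕ} (hl : 1 ≤ l) (hlm : l + 1 ≤ m) :
    iterLap l (eta0 m) =
      fun y => evalDivPow 4 (2 * l) (C (m / betaStar m) * acoefPoly m l) (‖y‖ ^ 2) := by
  induction l, hl using Nat.le_induction with
  | base => exact lap_eta0 hlm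
  | succ l hl ih =>
    rw [iterLap, Function.iterate_succ_apply', ← iterLap, ih (by omega)]
    funext y
    rw [lap_evalDivPow_norm_sq four_pos, radialLapNum_C_mul, radialLapNum_acoefPoly hl (by omega)]
    rfl

theorem statement15_general (m : ℕ) (l : ℕ) (hl1 : 1 ≤ l) (hlm : l ≤ m - 1)
    (y : EuclideanSpace ℝ (Fin (2*m))) :
    iterLap l (eta0 m) y =
      ((m : ℝ) / betaStar m) *
        ∑ k ∈ Finset.range (l+1), acoef m k l * ‖y‖^(2*k) / (4 + ‖y‖^2)^(2*l) := by
  rw [iterLap_eta0 hl1 (by omega)]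
  beta_reduce
  rw [evalDivPow, eval_mul, eval_C, mul_div_assoc, acoefPoly, eval_finsetSum, Finset.sum_div]
  congr 1
  refine Finset.sum_congr rfl fun k _ => ?_
  rw [eval_mul, eval_C, eval_pow, eval_X, add_comm (‖y‖ ^ 2), pow_mul, pow_mul]

/-- for `1 ≤ l ≤ m−1`,
`Δ^l η₀(y) = (m/β*) Σ_{k=0}^{l} a_{k,l} |y|^{2k} / (4 + |y|²)^{2l}`. -/
theorem statement15 (m : ℕ) (hm : 2 ≤ m) (l : ℕ) (hl1 : 1 ≤ l) (hlm : l ≤ m - 1)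
    (y : EuclideanSpace ℝ (Fin (2*m))) :
    iterLap l (eta0 m) y =
      ((m : ℝ) / betaStar m) *
        ∑ k ∈ Finset.range (l+1), acoef m k l * ‖y‖^(2*k) / (4 + ‖y‖^2)^(2*l) :=
  statement15_general m l hl1 hlm y
end
end

section
/- For every x₀ ∈ ℝ^{2m} and all reals ε, R, μ > 0 there exists a unique function p : ℝ^{2m} → ℝ of the form p(x) = −μ² + Σ_{j=0}^{m−1} c_j |x − x₀|^{2j} (with c_0, …, c_{m−1} ∈ ℝ) such that for every integer i with 0 ≤ i ≤ m−1 and every x on the sphere ∂B_{εR}(x₀), the i-th derivative of p in the outward radial direction at x equals minus the i-th outward radial derivative at x of the function x ↦ μ² + η₀((x − x₀)/ε) + (2m/β*) log|x − x₀|. Moreover, c_0 = −(2m/β*) log(2ε) + d_0(R) and c_j = (εR)^{−2j} d_j(R) for 1 ≤ j ≤ m−1, where d_0(R), …, d_{m−1}(R) depend only on m and R and satisfy d_j(R) = O(R^{−2}) as R → +∞ (i.e. there are constants C, R₁ > 0 depending only on m with |d_j(R)| ≤ C R^{−2} for all R ≥ R₁). -/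
open MeasureTheory Real
noncomputable section

/-- The `i`-th outward radial derivative of `f` at `x`, relative to the center `x₀`:
the `i`-th directional derivative of `f` at `x` along the unit vector `(x − x₀)/|x − x₀|`. -/
def radialDeriv {n : ℕ} (i : ℕ) (x₀ : EuclideanSpace ℝ (Fin n))
    (f : EuclideanSpace ℝ (Fin n) → ℝ) (x : EuclideanSpace ℝ (Fin n)) : ℝ :=
  iteratedDeriv i (fun t : ℝ => f (x + t • (‖x - x₀‖⁻¹ • (x - x₀)))) 0


/-!
Along the ray through a point of `∂B_r(x₀)`, `r = εR`, both functions are radial, so their radial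
derivatives are the derivatives of their profiles at `r`. In the variable `σ = s / r` and with
`δ = R⁻²`, the right-hand profile is `μ² + (2m/β*) log (2ε) - (m/β*) log (1 + 4δ/σ²)`, and the
polynomial becomes the even polynomial `∑ aⱼ σ²ʲ`, `aⱼ = cⱼ r²ʲ`. After the constant
`(2m/β*) log (2ε)` is absorbed into `a₀`, the matching conditions say that the jet of order `m - 1`
at `σ = 1` of this even polynomial equals that of `(m/β*) log (1 + 4δ/σ²)`.

The jet map on even polynomials of degree `< 2m` is injective, hence bijective: this gives
existence and uniqueness, with `d(R)` the preimage of a jet depending on `R` only. Every derivative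
of `log (1 + 4δ/σ²)` at `σ = 1` is `O(δ)`: the value is `log (1 + 4δ) ≤ 4δ`, and the derivative is
`-8δ / (σ³ + 4δσ)`, whose derivatives at `1` are polynomials in `δ` divided by powers of `1 + 4δ`,
hence bounded for `δ ∈ [0, 1]`.
-/

open Polynomial Filter Topology

theorem iteratedDeriv_const_add_apply {𝕜 F : Type*} [NontriviallyNormedField 𝕜]
    [NormedAddCommGroup F] [NormedSpace 𝕜 F] (n : ℕ) (c : F) (f : 𝕜 → F) (x : 𝕜) :
    iteratedDeriv n (fun z => c + f z) x = (if n = 0 then c else 0) + iteratedDeriv n f x := by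
  rcases n.eq_zero_or_pos with rfl | hn
  · simp
  · simp [iteratedDeriv_const_add hn, hn.ne']

theorem iteratedDeriv_comp_mul_left {𝕜 F : Type*} [NontriviallyNormedField 𝕜]
    [NormedAddCommGroup F] [NormedSpace 𝕜 F] (n : ℕ) (c : 𝕜) (f : 𝕜 → F) (x : 𝕜) :
    iteratedDeriv n (fun t => f (c * t)) x = c ^ n • iteratedDeriv n f (c * x) := by
  induction n generalizing x with
  | zero => simp
  | succ n ih =>
    rw [iteratedDeriv_succ, funext ih, deriv_fun_const_smul_field, iteratedDeriv_succ,
      deriv_comp_mul_left (f := iteratedDeriv n f), smul_smul, pow_succ]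

theorem radialDeriv_eq_iteratedDeriv {n : ℕ} (i : ℕ) {x₀ x : EuclideanSpace ℝ (Fin n)}
    {f : EuclideanSpace ℝ (Fin n) → ℝ} {φ : ℝ → ℝ} (hf : ∀ y ≠ x₀, f y = φ ‖y - x₀‖)
    (hx : x ≠ x₀) : radialDeriv i x₀ f x = iteratedDeriv i φ ‖x - x₀‖ := by
  set r := ‖x - x₀‖
  have hr : 0 < r := norm_pos_iff.2 (sub_ne_zero.2 hx)
  have hray : (fun t : ℝ => f (x + t • (r⁻¹ • (x - x₀)))) =ᶠ[𝓝 0] fun t => φ (r + t) := by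
    filter_upwards [Ioi_mem_nhds (neg_lt_zero.2 hr)] with t ht
    have hrt : 0 < r + t := by linarith [Set.mem_Ioi.1 ht]
    have hpt : x + t • (r⁻¹ • (x - x₀)) - x₀ = ((r + t) / r) • (x - x₀) := by
      rw [add_div, div_self hr.ne', div_eq_mul_inv, add_smul, one_smul, mul_smul]
      abel
    have hnorm : ‖x + t • (r⁻¹ • (x - x₀)) - x₀‖ = r + t := by
      rw [hpt, norm_smul, Real.norm_of_nonneg (by positivity), div_mul_cancel₀ _ hr.ne']
    rw [hf _ (by rw [← sub_ne_zero, ← norm_pos_iff, hnorm]; exact hrt), hnorm]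
  rw [radialDeriv, hray.iteratedDeriv_eq, iteratedDeriv_comp_const_add]
  simp only [add_zero]

namespace Polynomial

theorem iteratedDeriv_eval {𝕜 : Type*} [NontriviallyNormedField 𝕜] (p : 𝕜[X])
    (n : ℕ) : iteratedDeriv n (fun x => p.eval x) = fun x => (derivative^[n] p).eval x := by
  induction n generalizing p with
  | zero => rfl
  | succ n ih =>
    rw [iteratedDeriv_succ', Function.iterate_succ_apply, ← ih]
    congr 1
    funext x
    exact p.deriv

/-- The numerators in `(1 / q)⁽ᵏ⁾ = invDerivNum q k / q ^ (k + 1)`. -/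
def invDerivNum {R : Type*} [CommRing R] (q : R[X]) : ℕ → R[X]
  | 0 => 1
  | k + 1 => derivative (invDerivNum q k) * q - (k + 1 : R[X]) * derivative q * invDerivNum q k

theorem map_invDerivNum {R S : Type*} [CommRing R] [CommRing S] (f : R →+* S) (q : R[X])
    (k : ℕ) : (invDerivNum q k).map f = invDerivNum (q.map f) k := by
  induction k with
  | zero => simp [invDerivNum]
  | succ k ih => simp [invDerivNum, ← ih, derivative_map]

theorem iteratedDeriv_inv_eval {𝕜 : Type*} [NontriviallyNormedField 𝕜] {q : 𝕜[X]} (k : ℕ)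
    {x : 𝕜} (hx : q.eval x ≠ 0) :
    iteratedDeriv k (fun t => (q.eval t)⁻¹) x = (invDerivNum q k).eval x / q.eval x ^ (k + 1) := by
  induction k generalizing x with
  | zero => simp [invDerivNum]
  | succ k ih =>
    have hopen : IsOpen {t | q.eval t ≠ 0} := isOpen_ne_fun q.continuous continuous_const
    have hev : iteratedDeriv k (fun t => (q.eval t)⁻¹)
        =ᶠ[𝓝 x] fun t => (invDerivNum q k).eval t / q.eval t ^ (k + 1) :=
      eventually_of_mem (hopen.mem_nhds hx) fun t ht => ih ht
    have hquot := ((invDerivNum q k).hasDerivAt x).fun_div ((q.hasDerivAt x).fun_pow (k + 1))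
      (pow_ne_zero _ hx)
    rw [iteratedDeriv_succ, hev.deriv_eq, hquot.deriv, invDerivNum]
    field_simp
    simp only [eval_sub, eval_mul, eval_add, eval_natCast, eval_one]
    push_cast
    ring

end Polynomial

section EvenJet

variable {K : Type*} [Field K] {m : ℕ}

def evenPoly (a : Fin m → K) : K[X] := ∑ j, C (a j) * X ^ (2 * (j : ℕ))

theorem evenPoly_add (a b : Fin m → K) : evenPoly (a + b) = evenPoly a + evenPoly b := by
  simp [evenPoly, add_mul, Finset.sum_add_distrib]

theorem evenPoly_smul (c : K) (a : Fin m → K) : evenPoly (c • a) = c • evenPoly a := by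
  simp [evenPoly, Finset.smul_sum, smul_eq_C_mul, mul_assoc]

theorem coeff_evenPoly (a : Fin m → K) (j : Fin m) : (evenPoly a).coeff (2 * j) = a j := by
  rw [evenPoly, finsetSum_coeff, Finset.sum_eq_single j]
  · simp
  · intro j' _ hne
    rw [coeff_C_mul_X_pow, if_neg (by omega)]
  · simp

theorem natDegree_evenPoly_le (a : Fin m → K) : (evenPoly a).natDegree ≤ 2 * (m - 1) :=
  natDegree_sum_le_of_forall_le _ _ fun j _ => (natDegree_C_mul_X_pow_le _ _).trans (by omega)

theorem evenPoly_comp_neg_X (a : Fin m → K) : (evenPoly a).comp (-X) = evenPoly a := by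
  simp [evenPoly, sum_comp, pow_mul]

variable (K m) in
def evenJet : (Fin m → K) →ₗ[K] Fin m → K where
  toFun a i := (derivative^[i] (evenPoly a)).eval 1
  map_add' a b := by funext i; simp [evenPoly_add, iterate_map_add]
  map_smul' c a := by funext i; simp [evenPoly_smul, iterate_derivative_smul]

/-- An even polynomial whose derivatives of order `< m` vanish at `1` also vanishes to order `m`
at `-1`, so it is divisible by `(X² - 1)ᵐ`, which is impossible below degree `2m`. -/
theorem evenJet_injective [CharZero K] : Function.Injective (evenJet K m) := by
  rw [← LinearMap.ker_eq_bot, LinearMap.ker_eq_bot']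
  intro a ha
  suffices hp : evenPoly a = 0 by
    funext j
    rw [← coeff_evenPoly a j, hp, coeff_zero, Pi.zero_apply]
  set p := evenPoly a
  by_contra hp
  have hm : m ≠ 0 := by
    rintro rfl
    exact hp (by simp [p, evenPoly])
  have hdvd₁ : (X - C 1) ^ m ∣ p := by
    have : m - 1 < p.rootMultiplicity 1 :=
      lt_rootMultiplicity_of_isRoot_iterate_derivative hp fun k hk => congrFun ha ⟨k, by omega⟩
    exact (le_rootMultiplicity_iff hp).1 (by omega)
  have hdvd₂ : (X - C (-1)) ^ m ∣ p := by
    have := map_dvd (compRingHom (-X)) hdvd₁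
    rw [coe_compRingHom_apply, coe_compRingHom_apply, evenPoly_comp_neg_X, pow_comp, sub_comp,
      X_comp, C_comp, show -X - C (1 : K) = -(X - C (-1)) by simp; ring, neg_pow] at this
    exact (dvd_mul_left _ _).trans this
  have hcop : IsCoprime ((X - C (1 : K)) ^ m) ((X - C (-1)) ^ m) :=
    (isCoprime_X_sub_C_of_isUnit_sub (by norm_num)).pow
  have hdeg := natDegree_le_of_dvd (hcop.mul_dvd hdvd₁ hdvd₂) hp
  rw [natDegree_mul (pow_ne_zero _ (X_sub_C_ne_zero _)) (pow_ne_zero _ (X_sub_C_ne_zero _)),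
    natDegree_pow, natDegree_pow, natDegree_X_sub_C, natDegree_X_sub_C] at hdeg
  have : p.natDegree ≤ 2 * (m - 1) := natDegree_evenPoly_le a
  omega

theorem iteratedDeriv_evenPoly_eval {r : ℝ} (hr : r ≠ 0) (a : Fin m → ℝ) (i : Fin m) :
    iteratedDeriv i (fun s => (evenPoly a).eval (r⁻¹ * s)) r
      = r⁻¹ ^ (i : ℕ) * evenJet ℝ m a i := by
  rw [iteratedDeriv_comp_mul_left _ _ fun x => (evenPoly a).eval x, iteratedDeriv_eval,
    inv_mul_cancel₀ hr, smul_eq_mul]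
  rfl

end EvenJet

def bubbleTail (δ σ : ℝ) : ℝ := Real.log (1 + 4 * δ / σ ^ 2)

/-- `X³ + 4δX`, with the parameter `δ` as an indeterminate. -/
def tailDenom : ℝ[X][X] := X ^ 3 + C (4 * X) * X

theorem eval_map_tailDenom (δ σ : ℝ) :
    (tailDenom.map (evalRingHom δ)).eval σ = σ ^ 3 + 4 * δ * σ := by
  simp [tailDenom]

theorem hasDerivAt_bubbleTail {δ σ : ℝ} (hδ : 0 ≤ δ) (hσ : 0 < σ) :
    HasDerivAt (bubbleTail δ) (-8 * δ * ((tailDenom.map (evalRingHom δ)).eval σ)⁻¹) σ := by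
  have hpos : 0 < 1 + 4 * δ / σ ^ 2 := by positivity
  have h := (((hasDerivAt_pow 2 σ).fun_inv (by positivity)).const_mul (4 * δ)).const_add 1
  convert h.log hpos.ne' using 1
  · funext s
    simp [bubbleTail, div_eq_mul_inv]
  · rw [eval_map_tailDenom]
    field_simp
    ring

theorem iteratedDeriv_succ_bubbleTail {δ : ℝ} (hδ : 0 ≤ δ) (k : ℕ) :
    iteratedDeriv (k + 1) (bubbleTail δ) 1
      = -8 * δ * (((invDerivNum tailDenom k).eval 1).eval δ / (1 + 4 * δ) ^ (k + 1)) := by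
  have hderiv : deriv (bubbleTail δ) =ᶠ[𝓝 1]
      fun σ => -8 * δ * ((tailDenom.map (evalRingHom δ)).eval σ)⁻¹ :=
    eventually_of_mem (Ioi_mem_nhds one_pos) fun σ hσ => (hasDerivAt_bubbleTail hδ hσ).deriv
  have hq : (tailDenom.map (evalRingHom δ)).eval 1 = 1 + 4 * δ := by
    rw [eval_map_tailDenom]; ring
  rw [iteratedDeriv_succ', hderiv.iteratedDeriv_eq, iteratedDeriv_const_mul_field,
    iteratedDeriv_inv_eval k (by rw [hq]; positivity), hq, ← map_invDerivNum, eval_map,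
    eval₂_at_one, coe_evalRingHom]

theorem exists_abs_iteratedDeriv_bubbleTail_le (k : ℕ) :
    ∃ C, ∀ δ ∈ Set.Icc (0 : ℝ) 1, |iteratedDeriv k (bubbleTail δ) 1| ≤ C * δ := by
  cases k with
  | zero =>
    refine ⟨4, fun δ hδ => ?_⟩
    have hlog := Real.log_le_sub_one_of_pos (show 0 < 1 + 4 * δ by linarith [hδ.1])
    simp only [iteratedDeriv_zero, bubbleTail, one_pow, div_one]
    rw [abs_of_nonneg (Real.log_nonneg (by linarith [hδ.1]))]
    linarith
  | succ k =>
    obtain ⟨B, hB⟩ := isCompact_Icc.exists_bound_of_continuousOn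
      ((invDerivNum tailDenom k).eval 1).continuous.continuousOn
    refine ⟨8 * B, fun δ hδ => ?_⟩
    have hden : 1 ≤ (1 + 4 * δ) ^ (k + 1) := one_le_pow₀ (by linarith [hδ.1])
    have hquot : |((invDerivNum tailDenom k).eval 1).eval δ / (1 + 4 * δ) ^ (k + 1)| ≤ B := by
      rw [abs_div, abs_of_pos (zero_lt_one.trans_le hden), ← Real.norm_eq_abs]
      exact (div_le_self (abs_nonneg _) hden).trans (hB δ hδ)
    rw [iteratedDeriv_succ_bubbleTail hδ.1, abs_mul, abs_mul, abs_neg, Nat.abs_ofNat,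
      abs_of_nonneg hδ.1]
    nlinarith [hδ.1]

theorem eta0_smul_add_log_norm {m : ℕ} {ε R : ℝ} (hε : 0 < ε) (hR : 0 < R)
    {v : EuclideanSpace ℝ (Fin (2 * m))} (hv : v ≠ 0) :
    eta0 m (ε⁻¹ • v) + 2 * (m : ℝ) / betaStar m * Real.log ‖v‖
      = 2 * (m / betaStar m) * Real.log (2 * ε)
        + -(m / betaStar m) * bubbleTail (R ^ 2)⁻¹ ((ε * R)⁻¹ * ‖v‖) := by
  have hs : 0 < ‖v‖ := norm_pos_iff.2 hv
  have hsplit : 1 + ‖ε⁻¹ • v‖ ^ 2 / 4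
      = (‖v‖ / (2 * ε)) ^ 2 * (1 + 4 * (R ^ 2)⁻¹ / ((ε * R)⁻¹ * ‖v‖) ^ 2) := by
    rw [norm_smul, Real.norm_of_nonneg (inv_nonneg.2 hε.le)]
    field_simp
    ring
  rw [eta0, bubbleTail, hsplit, Real.log_mul (by positivity) (by positivity), Real.log_pow,
    Real.log_div hs.ne' (by positivity)]
  ring

section Matching

variable {m : ℕ}

variable (m) in
def RadialMatching (x₀ : EuclideanSpace ℝ (Fin (2 * m))) (ε R μ : ℝ) (c : ℕ → ℝ) : Prop :=
  ∀ i < m, ∀ x ∈ Metric.sphere x₀ (ε * R),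
    radialDeriv i x₀ (fun y => -μ ^ 2 + ∑ j ∈ Finset.range m, c j * ‖y - x₀‖ ^ (2 * j)) x
      = - radialDeriv i x₀
          (fun y => μ ^ 2 + eta0 m (ε⁻¹ • (y - x₀))
            + (2 * (m : ℝ) / betaStar m) * Real.log ‖y - x₀‖) x

variable (m) in
def tailJet (R : ℝ) : Fin m → ℝ :=
  fun i => m / betaStar m * iteratedDeriv i (bubbleTail (R ^ 2)⁻¹) 1

variable (m) in
/-- The constant `(2m/β*) log (2ε)` of the bubble profile is absorbed into the constant term. -/
def scaledCoeffs (ε R : ℝ) (c : ℕ → ℝ) : Fin m → ℝ :=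
  fun j => c j * (ε * R) ^ (2 * (j : ℕ))
    + if (j : ℕ) = 0 then 2 * (m / betaStar m) * Real.log (2 * ε) else 0

theorem eval_evenPoly_scaledCoeffs (hm : 0 < m) {ε R : ℝ} (hr : ε * R ≠ 0) (c : ℕ → ℝ)
    (s : ℝ) :
    (evenPoly (scaledCoeffs m ε R c)).eval ((ε * R)⁻¹ * s)
      = 2 * (m / betaStar m) * Real.log (2 * ε) + ∑ j ∈ Finset.range m, c j * s ^ (2 * j) := by
  simp only [evenPoly, eval_finsetSum, eval_mul, eval_C, eval_pow, eval_X, scaledCoeffs,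
    add_mul, Finset.sum_add_distrib, ite_mul, zero_mul]
  rw [Fin.sum_univ_eq_sum_range (fun j => c j * (ε * R) ^ (2 * j) * ((ε * R)⁻¹ * s) ^ (2 * j)),
    Fin.sum_univ_eq_sum_range (fun j => if j = 0 then _ * ((ε * R)⁻¹ * s) ^ (2 * j) else 0),
    Finset.sum_ite_eq', if_pos (Finset.mem_range.2 hm), add_comm]
  congr 1
  · simp
  · refine Finset.sum_congr rfl fun j _ => ?_
    rw [mul_assoc, ← mul_pow, ← mul_assoc, mul_inv_cancel₀ hr, one_mul]

theorem radialDeriv_matching_iff {x₀ x : EuclideanSpace ℝ (Fin (2 * m))} {ε R : ℝ} (hε : 0 < ε)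
    (hR : 0 < R) (μ : ℝ) (c : ℕ → ℝ) (hx : x ∈ Metric.sphere x₀ (ε * R)) (i : Fin m) :
    radialDeriv i x₀ (fun y => -μ ^ 2 + ∑ j ∈ Finset.range m, c j * ‖y - x₀‖ ^ (2 * j)) x
        = - radialDeriv i x₀
            (fun y => μ ^ 2 + eta0 m (ε⁻¹ • (y - x₀))
              + (2 * (m : ℝ) / betaStar m) * Real.log ‖y - x₀‖) x
      ↔ evenJet ℝ m (scaledCoeffs m ε R c) i = tailJet m R i := by
  set r := ε * R
  set κ := (m : ℝ) / betaStar m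
  set ℓ := 2 * κ * Real.log (2 * ε)
  have hr : r ≠ 0 := (mul_pos hε hR).ne'
  have hxr : ‖x - x₀‖ = r := mem_sphere_iff_norm.1 hx
  have hx₀ : x ≠ x₀ := by
    rw [← sub_ne_zero, ← norm_ne_zero_iff, hxr]
    exact hr
  have hpoly : radialDeriv i x₀
      (fun y => -μ ^ 2 + ∑ j ∈ Finset.range m, c j * ‖y - x₀‖ ^ (2 * j)) x
      = (if (i : ℕ) = 0 then -μ ^ 2 - ℓ else 0)
        + r⁻¹ ^ (i : ℕ) * evenJet ℝ m (scaledCoeffs m ε R c) i := by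
    rw [radialDeriv_eq_iteratedDeriv i
      (φ := fun s => (-μ ^ 2 - ℓ) + (evenPoly (scaledCoeffs m ε R c)).eval (r⁻¹ * s))
      (fun y _ => ?_) hx₀, hxr, iteratedDeriv_const_add_apply, iteratedDeriv_evenPoly_eval hr]
    rw [eval_evenPoly_scaledCoeffs (Fin.pos i) hr]
    ring
  have hbubble : radialDeriv i x₀
      (fun y => μ ^ 2 + eta0 m (ε⁻¹ • (y - x₀))
        + (2 * (m : ℝ) / betaStar m) * Real.log ‖y - x₀‖) x
      = (if (i : ℕ) = 0 then μ ^ 2 + ℓ else 0)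
        + -κ * (r⁻¹ ^ (i : ℕ) * iteratedDeriv i (bubbleTail (R ^ 2)⁻¹) 1) := by
    rw [radialDeriv_eq_iteratedDeriv i
      (φ := fun s => (μ ^ 2 + ℓ) + -κ * bubbleTail (R ^ 2)⁻¹ (r⁻¹ * s))
      (fun y hy => ?_) hx₀, hxr, iteratedDeriv_const_add_apply, iteratedDeriv_const_mul_field,
      iteratedDeriv_comp_mul_left, smul_eq_mul, inv_mul_cancel₀ hr]
    rw [add_assoc, eta0_smul_add_log_norm hε hR (sub_ne_zero.2 hy)]
    ring
  have hq : r⁻¹ ^ (i : ℕ) ≠ 0 := pow_ne_zero _ (inv_ne_zero hr)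
  rw [hpoly, hbubble, tailJet]
  constructor
  · intro h
    apply mul_left_cancel₀ hq
    split_ifs at h <;> linarith
  · intro h
    rw [h]
    split_ifs <;> ring

theorem radialMatching_iff {x₀ : EuclideanSpace ℝ (Fin (2 * m))} {ε R : ℝ} (hε : 0 < ε)
    (hR : 0 < R) (μ : ℝ) (c : ℕ → ℝ) :
    RadialMatching m x₀ ε R μ c ↔ evenJet ℝ m (scaledCoeffs m ε R c) = tailJet m R := by
  constructor
  · intro h
    funext i
    have : Nonempty (Fin (2 * m)) := ⟨⟨0, by have := i.isLt; omega⟩⟩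
    obtain ⟨x, hx⟩ := (NormedSpace.sphere_nonempty (x := x₀)).2 (mul_pos hε hR).le
    exact (radialDeriv_matching_iff hε hR μ c hx i).1 (h i i.isLt x hx)
  · intro h i hi x hx
    exact (radialDeriv_matching_iff hε hR μ c hx ⟨i, hi⟩).2 (congrFun h _)

variable (m) in
def evenJetEquiv : (Fin m → ℝ) ≃ₗ[ℝ] Fin m → ℝ :=
  LinearEquiv.ofInjectiveEndo (evenJet ℝ m) evenJet_injective

variable (m) in
def tailCoeff (j : ℕ) (R : ℝ) : ℝ :=
  if h : j < m then (evenJetEquiv m).symm (tailJet m R) ⟨j, h⟩ else 0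

theorem radialMatching_iff_forall_eq {x₀ : EuclideanSpace ℝ (Fin (2 * m))} {ε R : ℝ}
    (hε : 0 < ε) (hR : 0 < R) (μ : ℝ) (c : ℕ → ℝ) :
    RadialMatching m x₀ ε R μ c ↔ ∀ j : Fin m,
      c j = ((ε * R) ^ (2 * (j : ℕ)))⁻¹
        * (tailCoeff m j R
          - if (j : ℕ) = 0 then 2 * (m / betaStar m) * Real.log (2 * ε) else 0) := by
  have hr : ε * R ≠ 0 := (mul_pos hε hR).ne'
  rw [radialMatching_iff hε hR, show evenJet ℝ m = (evenJetEquiv m : _ →ₗ[ℝ] _) from rfl,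
    LinearEquiv.coe_coe, ← LinearEquiv.eq_symm_apply, funext_iff]
  refine forall_congr' fun j => ?_
  rw [tailCoeff, dif_pos j.isLt, scaledCoeffs, eq_inv_mul_iff_mul_eq₀ (pow_ne_zero _ hr),
    ← eq_sub_iff_add_eq, mul_comm]

end Matching

theorem exists_norm_tailJet_le (m : ℕ) :
    ∃ C ≥ 0, ∀ R : ℝ, 1 ≤ R → ‖tailJet m R‖ ≤ C * (R ^ 2)⁻¹ := by
  choose C hC using exists_abs_iteratedDeriv_bubbleTail_le
  set B := ∑ i : Fin m, |C i|
  refine ⟨|(m : ℝ) / betaStar m| * B, by positivity, fun R hR => ?_⟩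
  have hδ : (R ^ 2)⁻¹ ∈ Set.Icc (0 : ℝ) 1 :=
    ⟨by positivity, inv_le_one_of_one_le₀ (one_le_pow₀ hR)⟩
  refine pi_norm_le_iff_of_nonneg (by positivity) |>.2 fun i => ?_
  have hCB : C i ≤ B := (le_abs_self _).trans
    (Finset.single_le_sum (f := fun i : Fin m => |C (i : ℕ)|) (fun _ _ => abs_nonneg _)
      (Finset.mem_univ i))
  rw [tailJet, Real.norm_eq_abs, abs_mul, mul_assoc]
  gcongr
  exact (hC i _ hδ).trans (by gcongr)

theorem exists_abs_tailCoeff_le (m : ℕ) :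
    ∃ C > 0, ∀ j < m, ∀ R : ℝ, 1 ≤ R → |tailCoeff m j R| ≤ C * (R ^ 2)⁻¹ := by
  obtain ⟨C, hC₀, hC⟩ := exists_norm_tailJet_le m
  set T := LinearMap.toContinuousLinearMap (evenJetEquiv m).symm.toLinearMap
  refine ⟨‖T‖ * C + 1, by positivity, fun j hj R hR => ?_⟩
  rw [tailCoeff, dif_pos hj]
  calc |(evenJetEquiv m).symm (tailJet m R) ⟨j, hj⟩|
      ≤ ‖T (tailJet m R)‖ := norm_le_pi_norm (T (tailJet m R)) _
    _ ≤ ‖T‖ * (C * (R ^ 2)⁻¹) := T.le_opNorm_of_le (hC R hR)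
    _ ≤ (‖T‖ * C + 1) * (R ^ 2)⁻¹ := by nlinarith [inv_nonneg.2 (sq_nonneg R)]

theorem statement17_general (m : ℕ) :
    ∃ d : ℕ → ℝ → ℝ, ∃ C R₁ : ℝ, 0 < C ∧ 0 < R₁ ∧
      (∀ j < m, ∀ R : ℝ, R₁ ≤ R → |d j R| ≤ C * (R^2)⁻¹) ∧
      ∀ x₀ : EuclideanSpace ℝ (Fin (2*m)), ∀ ε R μ : ℝ, 0 < ε → 0 < R → 0 < μ →
        ∃ c : ℕ → ℝ,
          ((∀ i < m, ∀ x ∈ Metric.sphere x₀ (ε*R),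
              radialDeriv i x₀
                (fun y => -μ^2 + ∑ j ∈ Finset.range m, c j * ‖y - x₀‖^(2*j)) x
              = - radialDeriv i x₀
                  (fun y => μ^2 + eta0 m (ε⁻¹ • (y - x₀))
                    + (2*(m:ℝ) / betaStar m) * Real.log ‖y - x₀‖) x) ∧
            c 0 = -(2*(m:ℝ) / betaStar m) * Real.log (2*ε) + d 0 R ∧
            (∀ j, 1 ≤ j → j ≤ m - 1 → c j = ((ε*R)^(2*j))⁻¹ * d j R)) ∧
          (∀ c' : ℕ → ℝ,
            (∀ i < m, ∀ x ∈ Metric.sphere x₀ (ε*R),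
              radialDeriv i x₀
                (fun y => -μ^2 + ∑ j ∈ Finset.range m, c' j * ‖y - x₀‖^(2*j)) x
              = - radialDeriv i x₀
                  (fun y => μ^2 + eta0 m (ε⁻¹ • (y - x₀))
                    + (2*(m:ℝ) / betaStar m) * Real.log ‖y - x₀‖) x) →
            ∀ j < m, c' j = c j) := by
  obtain ⟨C, hC, hd⟩ := exists_abs_tailCoeff_le m
  refine ⟨tailCoeff m, C, 1, hC, one_pos, hd, fun x₀ ε R μ hε hR _ => ?_⟩
  set ℓ := 2 * ((m : ℝ) / betaStar m) * Real.log (2 * ε)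
  set c : ℕ → ℝ := fun j => ((ε * R) ^ (2 * j))⁻¹ * (tailCoeff m j R - if j = 0 then ℓ else 0)
  refine ⟨c, ⟨(radialMatching_iff_forall_eq hε hR μ c).2 fun j => rfl, ?_, ?_⟩, ?_⟩
  · simp only [c, ℓ, mul_zero, pow_zero, inv_one, one_mul, if_pos]
    ring
  · intro j hj _
    simp only [c, if_neg (show j ≠ 0 by omega), sub_zero]
  · intro c' hc' j hj
    exact (radialMatching_iff_forall_eq hε hR μ c').1 hc' ⟨j, hj⟩

/-- for every `x₀` and `ε, R, μ > 0` there is a unique radially symmetric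
polynomial `p(x) = −μ² + Σ_{j=0}^{m−1} c_j |x−x₀|^{2j}` whose radial derivatives of order
`0,…,m−1` on `∂B_{εR}(x₀)` are the negatives of those of
`x ↦ μ² + η₀((x−x₀)/ε) + (2m/β*) log|x−x₀|`; moreover `c₀ = −(2m/β*) log(2ε) + d₀(R)` and
`c_j = (εR)^{−2j} d_j(R)` where `d_j` depends only on `m` and `R` and `d_j(R) = O(R^{−2})`. -/
theorem statement17 (m : ℕ) (hm : 1 ≤ m) :
    ∃ d : ℕ → ℝ → ℝ, ∃ C R₁ : ℝ, 0 < C ∧ 0 < R₁ ∧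
      (∀ j < m, ∀ R : ℝ, R₁ ≤ R → |d j R| ≤ C * (R^2)⁻¹) ∧
      ∀ x₀ : EuclideanSpace ℝ (Fin (2*m)), ∀ ε R μ : ℝ, 0 < ε → 0 < R → 0 < μ →
        ∃ c : ℕ → ℝ,
          ((∀ i < m, ∀ x ∈ Metric.sphere x₀ (ε*R),
              radialDeriv i x₀
                (fun y => -μ^2 + ∑ j ∈ Finset.range m, c j * ‖y - x₀‖^(2*j)) x
              = - radialDeriv i x₀
                  (fun y => μ^2 + eta0 m (ε⁻¹ • (y - x₀))
                    + (2*(m:ℝ) / betaStar m) * Real.log ‖y - x₀‖) x) ∧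
            c 0 = -(2*(m:ℝ) / betaStar m) * Real.log (2*ε) + d 0 R ∧
            (∀ j, 1 ≤ j → j ≤ m - 1 → c j = ((ε*R)^(2*j))⁻¹ * d j R)) ∧
          (∀ c' : ℕ → ℝ,
            (∀ i < m, ∀ x ∈ Metric.sphere x₀ (ε*R),
              radialDeriv i x₀
                (fun y => -μ^2 + ∑ j ∈ Finset.range m, c' j * ‖y - x₀‖^(2*j)) x
              = - radialDeriv i x₀
                  (fun y => μ^2 + eta0 m (ε⁻¹ • (y - x₀))
                    + (2*(m:ℝ) / betaStar m) * Real.log ‖y - x₀‖) x) →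
            ∀ j < m, c' j = c j) :=
  statement17_general m
end
end
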